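/- arXiv:2309.04877 — 2 statements merged into one kernel-verified Lean document; each statement's English description precedes it below -/
import Mathlib

section
/- Let f : ℝ^d → ℝ be a differentiable function that is L-smooth and μ-strongly convex, with 0 < μ ≤ L, and let x* be the (unique) minimizer of f. Consider gradient descent x_{k+1} = x_k − η∇f(x_k) with step size 0 < η ≤ 2/(L+μ). Then for every T ∈ ℕ with T ≥ 1, ‖x_{T+1} − x*‖² ≤ (1 − 2ημL/(μ+L))^T · ‖x_1 − x*‖². -/
open RealInnerProductSpace

variable {d : ℕ}

lemma descent_lemma (f : EuclideanSpace ℝ (Fin d) → ℝ)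
    (f' : EuclideanSpace ℝ (Fin d) → EuclideanSpace ℝ (Fin d))
    (hgrad : ∀ z, HasGradientAt f (f' z) z) (L : ℝ) (hL : 0 ≤ L)
    (hsmooth : ∀ z w, ‖f' z - f' w‖ ≤ L * ‖z - w‖)
    (z w : EuclideanSpace ℝ (Fin d)) :
    f w ≤ f z + ⟪f' z, w - z⟫ + L / 2 * ‖w - z‖ ^ 2 := by
  have hf'cont : Continuous f' := by
    have : LipschitzWith (Real.toNNReal L) f' := by
      apply LipschitzWith.of_dist_le_mul
      intro a b
      simp only [dist_eq_norm, Real.coe_toNNReal _ hL]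
      exact hsmooth a b
    exact this.continuous
  set γ : ℝ → EuclideanSpace ℝ (Fin d) := fun t => z + t • (w - z) with hγ
  have hγcont : Continuous γ := by continuity
  have hderiv : ∀ t : ℝ, HasDerivAt (fun t => f (γ t)) ⟪f' (γ t), w - z⟫ t := by
    intro t
    have h1 : HasDerivAt γ (w - z) t := by
      have := ((hasDerivAt_id t).smul_const (w - z)).const_add z
      simpa [hγ] using this
    have h2 := (hgrad (γ t)).hasFDerivAt
    have := h2.comp_hasDerivAt t h1
    exact this
  have hcont : Continuous fun t : ℝ => ⟪f' (γ t), w - z⟫ := by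
    exact (Continuous.inner (hf'cont.comp hγcont) continuous_const)
  have hint : f (γ 1) - f (γ 0) = ∫ t in (0:ℝ)..1, ⟪f' (γ t), w - z⟫ := by
    rw [intervalIntegral.integral_eq_sub_of_hasDerivAt (fun t _ => hderiv t)
      (hcont.intervalIntegrable 0 1)]
  have hγ0 : γ 0 = z := by simp [hγ]
  have hγ1 : γ 1 = w := by simp [hγ]
  have hbound : ∀ t ∈ Set.Icc (0:ℝ) 1, ⟪f' (γ t), w - z⟫ ≤ ⟪f' z, w - z⟫ + (L * ‖w - z‖ ^ 2) * t := by
    intro t ht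
    have : ⟪f' (γ t) - f' z, w - z⟫ ≤ (L * ‖w - z‖ ^ 2) * t := by
      calc ⟪f' (γ t) - f' z, w - z⟫ ≤ ‖f' (γ t) - f' z‖ * ‖w - z‖ := real_inner_le_norm _ _
        _ ≤ (L * ‖γ t - z‖) * ‖w - z‖ := by
            apply mul_le_mul_of_nonneg_right (hsmooth _ _) (norm_nonneg _)
        _ = (L * ‖w - z‖ ^ 2) * t := by
            have : ‖γ t - z‖ = t * ‖w - z‖ := by
              simp [hγ, norm_smul, abs_of_nonneg ht.1]
            rw [this]; ring
    have hsplit : ⟪f' (γ t), w - z⟫ = ⟪f' z, w - z⟫ + ⟪f' (γ t) - f' z, w - z⟫ := by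
      rw [inner_sub_left]; ring
    linarith
  have hmono : (∫ t in (0:ℝ)..1, ⟪f' (γ t), w - z⟫) ≤
      ∫ t in (0:ℝ)..1, (⟪f' z, w - z⟫ + (L * ‖w - z‖ ^ 2) * t) := by
    apply intervalIntegral.integral_mono_on (by norm_num) (hcont.intervalIntegrable 0 1)
    · exact (Continuous.intervalIntegrable
        (continuous_const.add (continuous_const.mul continuous_id')) 0 1)
    · exact hbound
  have hval : (∫ t in (0:ℝ)..1, (⟪f' z, w - z⟫ + (L * ‖w - z‖ ^ 2) * t))
      = ⟪f' z, w - z⟫ + L / 2 * ‖w - z‖ ^ 2 := by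
    rw [intervalIntegral.integral_add (f := fun _ => ⟪f' z, w - z⟫) (g := fun t => L * ‖w - z‖ ^ 2 * t) intervalIntegrable_const
      (Continuous.intervalIntegrable (continuous_const.mul continuous_id') 0 1),
      intervalIntegral.integral_const_mul, integral_id]
    simp; ring
  rw [hγ0, hγ1] at hint
  linarith [hint, hmono, hval.le, hval.ge]

lemma coercive_lemma (f : EuclideanSpace ℝ (Fin d) → ℝ)
    (f' : EuclideanSpace ℝ (Fin d) → EuclideanSpace ℝ (Fin d))
    (hgrad : ∀ z, HasGradientAt f (f' z) z)
    (μ L : ℝ) (hμ : 0 < μ) (hμL : μ ≤ L)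
    (hsc : ∀ z w, f w ≥ f z + ⟪f' z, w - z⟫ + (μ / 2) * ‖z - w‖ ^ 2)
    (hsmooth : ∀ z w, ‖f' z - f' w‖ ≤ L * ‖z - w‖)
    (z w : EuclideanSpace ℝ (Fin d)) :
    ‖f' z - f' w‖ ^ 2 + μ * L * ‖z - w‖ ^ 2 ≤ (μ + L) * ⟪f' z - f' w, z - w⟫ := by
  have hL : 0 < L := lt_of_lt_of_le hμ hμL
  have hmono : ∀ a b : EuclideanSpace ℝ (Fin d),
      μ * ‖a - b‖ ^ 2 ≤ ⟪f' a - f' b, a - b⟫ := by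
    intro a b
    have h1 := hsc a b
    have h2 := hsc b a
    rw [show b - a = -(a - b) by abel, inner_neg_right] at h1
    rw [norm_sub_rev b a] at h2
    rw [inner_sub_left]
    linarith
  rcases eq_or_lt_of_le hμL with heq | hlt
  · subst heq
    have hA2 : ‖f' z - f' w‖ ^ 2 ≤ (μ * ‖z - w‖) ^ 2 :=
      pow_le_pow_left₀ (norm_nonneg _) (hsmooth z w) 2
    nlinarith [hmono z w, hA2, sq_nonneg ‖z - w‖]
  · have hcpos : 0 < L - μ := by linarith
    set Φ : EuclideanSpace ℝ (Fin d) → ℝ := fun p => f p - μ / 2 * ‖p‖ ^ 2 with hΦ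
    set G : EuclideanSpace ℝ (Fin d) → EuclideanSpace ℝ (Fin d) := fun p => f' p - μ • p with hG
    have hGexp : ∀ a v : EuclideanSpace ℝ (Fin d), ⟪G a, v⟫ = ⟪f' a, v⟫ - μ * ⟪a, v⟫ := by
      intro a v
      rw [hG]
      rw [inner_sub_left, real_inner_smul_left]
    have hnormsq : ∀ a b : EuclideanSpace ℝ (Fin d),
        ‖a - b‖ ^ 2 = ‖a‖ ^ 2 - 2 * ⟪a, b⟫ + ‖b‖ ^ 2 := fun a b => norm_sub_sq_real a b
    have hinner_sub : ∀ a b : EuclideanSpace ℝ (Fin d), ⟪a, b - a⟫ = ⟪a, b⟫ - ‖a‖ ^ 2 := by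
      intro a b
      rw [inner_sub_right, real_inner_self_eq_norm_sq]
    have hconv : ∀ a b, Φ a + ⟪G a, b - a⟫ ≤ Φ b := by
      intro a b
      have h := hsc a b
      have h1 := hGexp a (b - a)
      rw [hinner_sub a b] at h1
      rw [hnormsq a b] at h
      simp only [hΦ]
      rw [h1]
      linarith
    have hdesc2 : ∀ a b, Φ b ≤ Φ a + ⟪G a, b - a⟫ + (L - μ) / 2 * ‖b - a‖ ^ 2 := by
      intro a b
      have h := descent_lemma f f' hgrad L hL.le hsmooth a b
      have h1 := hGexp a (b - a)
      rw [hinner_sub a b] at h1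
      rw [norm_sub_rev b a, hnormsq a b] at h ⊢
      simp only [hΦ]
      rw [h1]
      linarith
    have hkey : ∀ a b, 1 / (2 * (L - μ)) * ‖G b - G a‖ ^ 2 ≤ Φ b - Φ a - ⟪G a, b - a⟫ := by
      intro a b
      set Δ := G b - G a with hΔ
      set u := b - (1 / (L - μ)) • Δ with hu
      have h1 := hdesc2 b u
      have h2 := hconv a u
      have hub : u - b = -((1 / (L - μ)) • Δ) := by rw [hu]; abel
      have e1 : ⟪G b, u - b⟫ = -(1 / (L - μ) * ⟪G b, Δ⟫) := by
        rw [hub, inner_neg_right, real_inner_smul_right]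
      have e2 : ‖u - b‖ ^ 2 = (1 / (L - μ)) ^ 2 * ‖Δ‖ ^ 2 := by
        rw [hub, norm_neg, norm_smul, Real.norm_eq_abs,
          abs_of_pos (by positivity : (0:ℝ) < 1 / (L - μ)), mul_pow]
      have e3 : ⟪G a, u - a⟫ = ⟪G a, b - a⟫ - 1 / (L - μ) * ⟪G a, Δ⟫ := by
        rw [show u - a = (b - a) - (1 / (L - μ)) • Δ by rw [hu]; abel,
          inner_sub_right, real_inner_smul_right]
      have e4 : ⟪G b, Δ⟫ - ⟪G a, Δ⟫ = ‖Δ‖ ^ 2 := by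
        rw [← inner_sub_left, ← hΔ, real_inner_self_eq_norm_sq]
      have e5 : (L - μ) / 2 * ((1 / (L - μ)) ^ 2 * ‖Δ‖ ^ 2) = 1 / (2 * (L - μ)) * ‖Δ‖ ^ 2 := by
        field_simp
      have e6 : 1 / (L - μ) * ⟪G b, Δ⟫ - 1 / (L - μ) * ⟪G a, Δ⟫ = 1 / (L - μ) * ‖Δ‖ ^ 2 := by
        rw [← mul_sub, e4]
      have e7 : 1 / (L - μ) * ‖Δ‖ ^ 2 - 1 / (2 * (L - μ)) * ‖Δ‖ ^ 2
          = 1 / (2 * (L - μ)) * ‖Δ‖ ^ 2 := by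
        field_simp
        ring
      rw [e1, e2, e5] at h1
      rw [e3] at h2
      linarith
    have h1 := hkey z w
    have h2 := hkey w z
    have hsum : ⟪G z, w - z⟫ + ⟪G w, z - w⟫ = -⟪G z - G w, z - w⟫ := by
      have e1 : ⟪G z - G w, z - w⟫ = ⟪G z, z - w⟫ - ⟪G w, z - w⟫ :=
        inner_sub_left (G z) (G w) (z - w)
      have e2 : ⟪G z, w - z⟫ = -⟪G z, z - w⟫ := by
        rw [show w - z = -(z - w) by abel, inner_neg_right]
      linarith
    have hΔΔ : ‖G w - G z‖ = ‖G z - G w‖ := norm_sub_rev _ _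
    rw [hΔΔ] at h1
    have hcomb : 1 / (L - μ) * ‖G z - G w‖ ^ 2 ≤ ⟪G z - G w, z - w⟫ := by
      have hadd : 1 / (2 * (L - μ)) * ‖G z - G w‖ ^ 2 + 1 / (2 * (L - μ)) * ‖G z - G w‖ ^ 2
          = 1 / (L - μ) * ‖G z - G w‖ ^ 2 := by field_simp; ring
      linarith
    have hmul0 := mul_le_mul_of_nonneg_left hcomb hcpos.le
    have hLHS : (L - μ) * (1 / (L - μ) * ‖G z - G w‖ ^ 2) = ‖G z - G w‖ ^ 2 := by
      field_simp
    rw [hLHS] at hmul0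
    have hGzw : G z - G w = (f' z - f' w) - μ • (z - w) := by
      rw [hG]
      simp only
      rw [smul_sub]
      abel
    have hip2 : ⟪G z - G w, z - w⟫ = ⟪f' z - f' w, z - w⟫ - μ * ‖z - w‖ ^ 2 := by
      rw [hGzw, inner_sub_left, real_inner_smul_left, real_inner_self_eq_norm_sq]
    have hnq : ‖G z - G w‖ ^ 2 = ‖f' z - f' w‖ ^ 2 - 2 * (μ * ⟪f' z - f' w, z - w⟫)
        + μ ^ 2 * ‖z - w‖ ^ 2 := by
      rw [hGzw, hnormsq, real_inner_smul_right, norm_smul, Real.norm_eq_abs,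
        abs_of_pos hμ, mul_pow]
    rw [hip2, hnq] at hmul0
    nlinarith [hmul0]

theorem gradient_descent_strongly_convex_linear_rate
    {d : ℕ} (f : EuclideanSpace ℝ (Fin d) → ℝ)
    (f' : EuclideanSpace ℝ (Fin d) → EuclideanSpace ℝ (Fin d))
    (hgrad : ∀ z, HasGradientAt f (f' z) z)
    (μ L : ℝ) (hμ : 0 < μ) (hμL : μ ≤ L)
    (hsc : ∀ z w, f w ≥ f z + ⟪f' z, w - z⟫ + (μ / 2) * ‖z - w‖ ^ 2)
    (hsmooth : ∀ z w, ‖f' z - f' w‖ ≤ L * ‖z - w‖)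
    (xstar : EuclideanSpace ℝ (Fin d)) (hmin : ∀ y, f xstar ≤ f y)
    (η : ℝ) (hη : 0 < η) (hη2 : η ≤ 2 / (L + μ))
    (x : ℕ → EuclideanSpace ℝ (Fin d))
    (hupd : ∀ k, x (k + 1) = x k - η • f' (x k))
    (T : ℕ) (hT : 1 ≤ T) :
    ‖x (T + 1) - xstar‖ ^ 2 ≤ (1 - 2 * η * μ * L / (μ + L)) ^ T * ‖x 1 - xstar‖ ^ 2 := by
  have hL : 0 < L := lt_of_lt_of_le hμ hμL
  have hP : 0 < μ + L := by linarith
  have hη2' : η * (μ + L) ≤ 2 := by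
    rw [le_div_iff₀ (by linarith : (0:ℝ) < L + μ)] at hη2
    linarith
  -- gradient vanishes at the minimizer
  have hstar : f' xstar = 0 := by
    have hloc : IsLocalMin f xstar := Filter.Eventually.of_forall hmin
    have h0 := hloc.hasFDerivAt_eq_zero (hgrad xstar).hasFDerivAt
    have := congrArg (InnerProductSpace.toDual ℝ (EuclideanSpace ℝ (Fin d))).symm h0
    simpa using this
  set ρ : ℝ := 1 - 2 * η * μ * L / (μ + L) with hρdef
  have hρ : 0 ≤ ρ := by
    rw [hρdef, sub_nonneg, div_le_one hP]
    nlinarith [sq_nonneg (μ - L), mul_le_mul_of_nonneg_left hη2'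
      (by positivity : (0:ℝ) ≤ 2 * μ * L), mul_pos hμ hL]
  have hstep : ∀ k, ‖x (k + 1) - xstar‖ ^ 2 ≤ ρ * ‖x k - xstar‖ ^ 2 := by
    intro k
    have hco := coercive_lemma f f' hgrad μ L hμ hμL hsc hsmooth (x k) xstar
    rw [hstar, sub_zero] at hco
    have hx : x (k + 1) - xstar = (x k - xstar) - η • f' (x k) := by
      rw [hupd k]; abel
    have hexp : ‖x (k + 1) - xstar‖ ^ 2 = ‖x k - xstar‖ ^ 2
        - 2 * (η * ⟪f' (x k), x k - xstar⟫) + η ^ 2 * ‖f' (x k)‖ ^ 2 := by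
      rw [hx, norm_sub_sq_real, real_inner_smul_right, norm_smul, Real.norm_eq_abs,
        abs_of_pos hη, mul_pow, real_inner_comm]
    have hipcomm : ⟪f' (x k), x k - xstar⟫ = ⟪f' (x k), x k - xstar⟫ := rfl
    rw [hexp]
    -- multiply target by (μ + L)
    rw [← mul_le_mul_iff_of_pos_right hP]
    have hρP : ρ * ‖x k - xstar‖ ^ 2 * (μ + L) = ((μ + L) - 2 * η * μ * L) * ‖x k - xstar‖ ^ 2 := by
      rw [hρdef]
      field_simp
    rw [hρP]
    nlinarith [mul_le_mul_of_nonneg_left hco (by positivity : (0:ℝ) ≤ 2 * η),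
      mul_nonneg (mul_nonneg (by linarith : (0:ℝ) ≤ 2 - η * (μ + L)) hη.le)
        (sq_nonneg ‖f' (x k)‖)]
  induction T, hT using Nat.le_induction with
  | base =>
    rw [pow_one]
    exact hstep 1
  | succ n hn ih =>
    calc ‖x (n + 1 + 1) - xstar‖ ^ 2 ≤ ρ * ‖x (n + 1) - xstar‖ ^ 2 := hstep (n + 1)
      _ ≤ ρ * (ρ ^ n * ‖x 1 - xstar‖ ^ 2) := mul_le_mul_of_nonneg_left ih hρ
      _ = ρ ^ (n + 1) * ‖x 1 - xstar‖ ^ 2 := by ring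
end

section
/- Let f : ℝ^d → ℝ be a differentiable convex function that is L-smooth for some L > 0, with a minimizer x*. Consider gradient descent with step size 1/L: x_{k+1} = x_k − (1/L)∇f(x_k). For any ε > 0, if T ∈ ℕ satisfies T ≥ 2L(f(x_1) − f(x*))/ε², then there exists 1 ≤ k ≤ T with ‖∇f(x_k)‖ ≤ ε, i.e., gradient descent reaches an ε-first-order stationary point within a number of iterations of order (f(x_1) − f(x*))L/ε². -/
open RealInnerProductSpace

/-- Descent (smoothness) upper bound: `f b ≤ f a + ⟪∇f a, b - a⟫ + L/2 ‖b-a‖²`. -/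
lemma smooth_upper_bound
    {d : ℕ} (f : EuclideanSpace ℝ (Fin d) → ℝ)
    (f' : EuclideanSpace ℝ (Fin d) → EuclideanSpace ℝ (Fin d))
    (hgrad : ∀ z, HasGradientAt f (f' z) z)
    (L : ℝ) (hL : 0 < L)
    (hsmooth : ∀ z w, ‖f' z - f' w‖ ≤ L * ‖z - w‖)
    (a b : EuclideanSpace ℝ (Fin d)) :
    f b ≤ f a + ⟪f' a, b - a⟫ + L / 2 * ‖b - a‖ ^ 2 := by
  set v := b - a with hv
  set ψ : ℝ → ℝ := fun t => f a + t * ⟪f' a, v⟫ + L / 2 * t ^ 2 * ‖v‖ ^ 2 - f (a + t • v)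
    with hψdef
  have hcurve : ∀ t : ℝ, HasDerivAt (fun s : ℝ => a + s • v) v t := by
    intro t
    simpa using ((hasDerivAt_id t).smul_const v).const_add a
  have hφ : ∀ t : ℝ, HasDerivAt (fun s : ℝ => f (a + s • v)) ⟪f' (a + t • v), v⟫ t := by
    intro t
    have := (hgrad (a + t • v)).hasFDerivAt.comp_hasDerivAt t (hcurve t)
    simpa [InnerProductSpace.toDual_apply_apply, Function.comp_def] using this
  have hderiv : ∀ t : ℝ,
      HasDerivAt ψ (⟪f' a, v⟫ + L / 2 * (2 * t) * ‖v‖ ^ 2 - ⟪f' (a + t • v), v⟫) t := by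
    intro t
    have h1 : HasDerivAt (fun s : ℝ => s * ⟪f' a, v⟫) ⟪f' a, v⟫ t := by
      simpa using (hasDerivAt_id t).mul_const ⟪f' a, v⟫
    have h2 : HasDerivAt (fun s : ℝ => L / 2 * s ^ 2 * ‖v‖ ^ 2)
        (L / 2 * (2 * t) * ‖v‖ ^ 2) t := by
      have := ((hasDerivAt_pow 2 t).const_mul (L / 2)).mul_const (‖v‖ ^ 2)
      simpa [mul_comm, mul_assoc] using this
    exact ((h1.const_add (f a)).add h2).sub (hφ t)
  have hdiff : Differentiable ℝ ψ := fun t => (hderiv t).differentiableAt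
  have hmono : MonotoneOn ψ (Set.Icc (0 : ℝ) 1) := by
    apply monotoneOn_of_deriv_nonneg (convex_Icc 0 1) hdiff.continuous.continuousOn
      (hdiff.differentiableOn.mono interior_subset)
    intro t ht
    rw [interior_Icc] at ht
    rw [(hderiv t).deriv]
    have hn : ‖f' (a + t • v) - f' a‖ ≤ L * t * ‖v‖ := by
      have := hsmooth (a + t • v) a
      simp only [add_sub_cancel_left] at this
      calc ‖f' (a + t • v) - f' a‖ ≤ L * ‖t • v‖ := this
        _ = L * t * ‖v‖ := by
          rw [norm_smul, Real.norm_eq_abs, abs_of_pos ht.1]; ring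
    have hip : ⟪f' (a + t • v) - f' a, v⟫ ≤ L * t * ‖v‖ * ‖v‖ := by
      calc ⟪f' (a + t • v) - f' a, v⟫ ≤ ‖f' (a + t • v) - f' a‖ * ‖v‖ := real_inner_le_norm _ _
        _ ≤ L * t * ‖v‖ * ‖v‖ := by
          apply mul_le_mul_of_nonneg_right hn (norm_nonneg _)
    rw [inner_sub_left] at hip
    nlinarith [sq_nonneg ‖v‖, sq_abs ‖v‖]
  have key := hmono (Set.left_mem_Icc.2 (by norm_num)) (Set.right_mem_Icc.2 (by norm_num))
    (by norm_num : (0:ℝ) ≤ 1)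
  have h0 : ψ 0 = 0 := by simp [hψdef]
  have h1 : ψ 1 = f a + ⟪f' a, v⟫ + L / 2 * ‖v‖ ^ 2 - f b := by
    simp [hψdef, hv]
  rw [h0, h1] at key
  linarith

theorem gradient_descent_reaches_eps_FOSP
    {d : ℕ} (f : EuclideanSpace ℝ (Fin d) → ℝ)
    (f' : EuclideanSpace ℝ (Fin d) → EuclideanSpace ℝ (Fin d))
    (hgrad : ∀ z, HasGradientAt f (f' z) z)
    (hconv : ∀ z w, f z ≥ f w + ⟪f' w, z - w⟫)
    (L : ℝ) (hL : 0 < L)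
    (hsmooth : ∀ z w, ‖f' z - f' w‖ ≤ L * ‖z - w‖)
    (xstar : EuclideanSpace ℝ (Fin d)) (hmin : ∀ y, f xstar ≤ f y)
    (x : ℕ → EuclideanSpace ℝ (Fin d))
    (hupd : ∀ k, x (k + 1) = x k - (1 / L) • f' (x k))
    (ε : ℝ) (hε : 0 < ε)
    (T : ℕ) (hT1 : 1 ≤ T)
    (hT : (T : ℝ) ≥ 2 * L * (f (x 1) - f xstar) / ε ^ 2) :
    ∃ k, 1 ≤ k ∧ k ≤ T ∧ ‖f' (x k)‖ ≤ ε := by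
  by_contra hcon
  push_neg at hcon
  -- one-step descent
  have hdesc : ∀ k : ℕ, f (x (k + 1)) ≤ f (x k) - 1 / (2 * L) * ‖f' (x k)‖ ^ 2 := by
    intro k
    have hub := smooth_upper_bound f f' hgrad L hL hsmooth (x k) (x (k + 1))
    have hd : x (k + 1) - x k = -((1 / L) • f' (x k)) := by
      rw [hupd k]; abel
    rw [hd] at hub
    have hip : ⟪f' (x k), -((1 / L) • f' (x k))⟫ = -(1 / L) * ‖f' (x k)‖ ^ 2 := by
      rw [inner_neg_right, real_inner_smul_right, real_inner_self_eq_norm_sq]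
      ring
    have hnrm : ‖-((1 / L) • f' (x k))‖ ^ 2 = (1 / L) ^ 2 * ‖f' (x k)‖ ^ 2 := by
      rw [norm_neg, norm_smul, Real.norm_eq_abs, abs_of_pos (by positivity : (0:ℝ) < 1 / L)]
      ring
    rw [hip, hnrm] at hub
    have hL' : L ≠ 0 := ne_of_gt hL
    calc f (x (k + 1)) ≤ f (x k) + -(1 / L) * ‖f' (x k)‖ ^ 2
        + L / 2 * ((1 / L) ^ 2 * ‖f' (x k)‖ ^ 2) := hub
      _ = f (x k) - 1 / (2 * L) * ‖f' (x k)‖ ^ 2 := by field_simp; ring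
  -- each gradient until T has norm > ε, giving strict decrease
  have hstep : ∀ k : ℕ, 1 ≤ k → k ≤ T → f (x (k + 1)) < f (x k) - ε ^ 2 / (2 * L) := by
    intro k hk1 hkT
    have hbig : ε < ‖f' (x k)‖ := hcon k hk1 hkT
    have : ε ^ 2 < ‖f' (x k)‖ ^ 2 := by nlinarith
    have := hdesc k
    have h2L : (0:ℝ) < 2 * L := by linarith
    calc f (x (k + 1)) ≤ f (x k) - 1 / (2 * L) * ‖f' (x k)‖ ^ 2 := hdesc k
      _ < f (x k) - ε ^ 2 / (2 * L) := by
        have : 1 / (2 * L) * ε ^ 2 < 1 / (2 * L) * ‖f' (x k)‖ ^ 2 := by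
          apply mul_lt_mul_of_pos_left ‹ε ^ 2 < _› (by positivity)
        have he : ε ^ 2 / (2 * L) = 1 / (2 * L) * ε ^ 2 := by ring
        linarith
  -- cumulative decrease
  have hcum : ∀ n : ℕ, 1 ≤ n → n ≤ T → f (x (n + 1)) < f (x 1) - n * (ε ^ 2 / (2 * L)) := by
    intro n hn1
    induction n, hn1 using Nat.le_induction with
    | base =>
      intro hT'
      have := hstep 1 le_rfl hT'
      push_cast
      linarith
    | succ n hn ih =>
      intro hT'
      have h1 := ih (le_trans (Nat.le_succ n) hT')
      have h2 := hstep (n + 1) (by omega) hT'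
      push_cast at h1 ⊢
      linarith
  have hfinal := hcum T hT1 le_rfl
  have hcmp : f xstar ≤ f (x (T + 1)) := hmin _
  have hε2 : (0:ℝ) < ε ^ 2 := by positivity
  have hTε : 2 * L * (f (x 1) - f xstar) ≤ (T : ℝ) * ε ^ 2 := by
    rw [ge_iff_le, div_le_iff₀ hε2] at hT
    linarith
  have h2L : (0:ℝ) < 2 * L := by linarith
  have hkey : (T : ℝ) * (ε ^ 2 / (2 * L)) * (2 * L) = (T : ℝ) * ε ^ 2 := by
    field_simp
  nlinarith [hfinal, hcmp, hTε, hkey, h2L]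
end
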